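/- arXiv:1904.05656 — 7 statements merged into one kernel-verified Lean document; each statement's English description precedes it below -/
import Mathlib

section
/- Any positive, strictly decreasing, weakly concave differentiable function F on (0, M^h) has positive superelasticity: the function φ(x) = -x·F'(x)/F(x) satisfies σ(x) = x·φ'(x)/φ(x) > 0 on (0, M^h). -/
/-- Any positive, strictly decreasing, weakly concave twice differentiable `F` on
`(0, Mh)` has positive superelasticity: `σ x = x * φ' x / φ x > 0` on `(0, Mh)`,
where `φ x = -x * F' x / F x`. -/
theorem superelasticity_pos
    (Mh : ℝ) (hMh : 0 < Mh) (F : ℝ → ℝ)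
    (hdiff : ∀ x ∈ Set.Ioo (0:ℝ) Mh, DifferentiableAt ℝ F x)
    (hdiff2 : ∀ x ∈ Set.Ioo (0:ℝ) Mh, DifferentiableAt ℝ (deriv F) x)
    (hpos : ∀ x ∈ Set.Ioo (0:ℝ) Mh, 0 < F x)
    (hdec : ∀ x ∈ Set.Ioo (0:ℝ) Mh, deriv F x < 0)
    (hconc : ∀ x ∈ Set.Ioo (0:ℝ) Mh, deriv (deriv F) x ≤ 0)
    (φ : ℝ → ℝ) (hφ : ∀ x, φ x = -x * deriv F x / F x) :
    ∀ x ∈ Set.Ioo (0:ℝ) Mh, 0 < x * deriv φ x / φ x := by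
  intro x hx
  obtain ⟨hx0, hxM⟩ := hx
  have hFx := hpos x ⟨hx0, hxM⟩
  have hF'x := hdec x ⟨hx0, hxM⟩
  have hF''x := hconc x ⟨hx0, hxM⟩
  have hF : HasDerivAt F (deriv F x) x := (hdiff x ⟨hx0, hxM⟩).hasDerivAt
  have hF' : HasDerivAt (deriv F) (deriv (deriv F) x) x :=
    (hdiff2 x ⟨hx0, hxM⟩).hasDerivAt
  have hg : HasDerivAt (fun y => -y * deriv F y)
      (-1 * deriv F x + -x * deriv (deriv F) x) x := by
    exact ((hasDerivAt_id' x).neg.mul hF')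
  have hq : HasDerivAt (fun y => -y * deriv F y / F y)
      (((-1 * deriv F x + -x * deriv (deriv F) x) * F x
          - (-x * deriv F x) * deriv F x) / F x ^ 2) x :=
    hg.div hF (ne_of_gt hFx)
  have hφeq : φ = fun y => -y * deriv F y / F y := funext hφ
  have hderiv : deriv φ x
      = ((-1 * deriv F x + -x * deriv (deriv F) x) * F x
          - (-x * deriv F x) * deriv F x) / F x ^ 2 := by
    rw [hφeq]; exact hq.deriv
  have hnum : 0 < (-1 * deriv F x + -x * deriv (deriv F) x) * F x
      - (-x * deriv F x) * deriv F x := by nlinarith [mul_pos (neg_pos.mpr hF'x) hFx, mul_pos hx0 (mul_pos (neg_pos.mpr hF'x) (neg_pos.mpr hF'x)), mul_nonneg (mul_nonneg hx0.le (neg_nonneg.mpr hF''x)) hFx.le]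
  have hφpos : 0 < φ x := by
    rw [hφ]
    exact div_pos (by nlinarith) hFx
  have hdpos : 0 < deriv φ x := by
    rw [hderiv]
    exact div_pos hnum (by positivity)
  exact div_pos (mul_pos hx0 hdpos) hφpos
end

section
/- Suppose ε > 1, γ ∈ (0,1], and φ : (0, M^h) → (0, ∞) is continuous and strictly increasing with lim_{m→0⁺} φ(m) = 0 and lim_{m→M^h} φ(m) = +∞, and m ↦ M^p(m) is a continuous strictly increasing bijection from (0, M^b) to (0, M^h) for some M^b > 1. Then the fixed-point equation M = 1 + (1/(ε-1))·(1/(1 + γ·φ(M^p(M)))) has a unique solution M on (0, M^b), and this solution satisfies 1 < M < ε/(ε-1). -/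
/-- With `ε > 1`, `γ ∈ (0,1]`, `φ` continuous strictly increasing on `(0, Mh)`
with limits `0` at `0⁺` and `+∞` at `Mh⁻`, and `Mp` a continuous strictly
increasing bijection from `(0, Mb)` onto `(0, Mh)` with `Mb > 1`, the fixed-point
equation `M = 1 + (1/(ε-1)) * (1/(1 + γ * φ (Mp M)))` has a unique solution on
`(0, Mb)`, which lies in `(1, ε/(ε-1))`. -/
theorem markup_fixed_point
    (ε γ Mh Mb : ℝ) (hε : 1 < ε) (hγ : 0 < γ) (hγ1 : γ ≤ 1)
    (hMh : ε / (ε - 1) < Mh) (hMb : 1 < Mb)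
    (φ Mp : ℝ → ℝ)
    (hφcont : ContinuousOn φ (Set.Ioo 0 Mh))
    (hφmono : StrictMonoOn φ (Set.Ioo 0 Mh))
    (hφpos : ∀ m ∈ Set.Ioo (0:ℝ) Mh, 0 < φ m)
    (hφ0 : Filter.Tendsto φ (nhdsWithin 0 (Set.Ioi 0)) (nhds 0))
    (hφtop : Filter.Tendsto φ (nhdsWithin Mh (Set.Iio Mh)) Filter.atTop)
    (hMpcont : ContinuousOn Mp (Set.Ioo 0 Mb))
    (hMpmono : StrictMonoOn Mp (Set.Ioo 0 Mb))
    (hMpbij : Set.BijOn Mp (Set.Ioo 0 Mb) (Set.Ioo 0 Mh)) :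
    (∃! M : ℝ, M ∈ Set.Ioo (0:ℝ) Mb ∧
      M = 1 + (1 / (ε - 1)) * (1 / (1 + γ * φ (Mp M)))) ∧
    (∀ M ∈ Set.Ioo (0:ℝ) Mb,
      M = 1 + (1 / (ε - 1)) * (1 / (1 + γ * φ (Mp M))) →
      M ∈ Set.Ioo 1 (ε / (ε - 1))) := by
  have hε1 : (0:ℝ) < ε - 1 := by linarith
  set F : ℝ → ℝ := fun M => 1 + (1 / (ε - 1)) * (1 / (1 + γ * φ (Mp M))) with hF
  have hmem : ∀ M ∈ Set.Ioo (0:ℝ) Mb, Mp M ∈ Set.Ioo (0:ℝ) Mh :=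
    fun M hM => hMpbij.mapsTo hM
  have hφpos' : ∀ M ∈ Set.Ioo (0:ℝ) Mb, 0 < φ (Mp M) :=
    fun M hM => hφpos _ (hmem M hM)
  have hden : ∀ M ∈ Set.Ioo (0:ℝ) Mb, 1 < 1 + γ * φ (Mp M) := by
    intro M hM
    nlinarith [hφpos' M hM]
  have hFgt1 : ∀ M ∈ Set.Ioo (0:ℝ) Mb, 1 < F M := by
    intro M hM
    have hd := hden M hM
    have h1 : 0 < 1 / (ε - 1) := by positivity
    have h2 : 0 < 1 / (1 + γ * φ (Mp M)) := by positivity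
    simp only [hF]
    nlinarith
  have hFub : ∀ M ∈ Set.Ioo (0:ℝ) Mb, F M < ε / (ε - 1) := by
    intro M hM
    have hd := hden M hM
    have h2 : 1 / (1 + γ * φ (Mp M)) < 1 := by
      rw [div_lt_one (by linarith)]; linarith
    have h3 : ε / (ε - 1) = 1 + 1 / (ε - 1) := by field_simp; ring
    have h1 : 0 < 1 / (ε - 1) := by positivity
    simp only [hF]
    rw [h3]
    nlinarith
  have hFanti : ∀ x ∈ Set.Ioo (0:ℝ) Mb, ∀ y ∈ Set.Ioo (0:ℝ) Mb, x < y → F y < F x := by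
    intro x hx y hy hxy
    have h1 : Mp x < Mp y := hMpmono hx hy hxy
    have h2 : φ (Mp x) < φ (Mp y) := hφmono (hmem x hx) (hmem y hy) h1
    have hdx := hden x hx
    have hdy := hden y hy
    have h3 : 1 + γ * φ (Mp x) < 1 + γ * φ (Mp y) := by nlinarith
    have h4 : 1 / (1 + γ * φ (Mp y)) < 1 / (1 + γ * φ (Mp x)) :=
      one_div_lt_one_div_of_lt (by linarith) h3
    have h1' : 0 < 1 / (ε - 1) := by positivity
    simp only [hF]
    nlinarith
  have hrange : ∀ M ∈ Set.Ioo (0:ℝ) Mb,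
      M = 1 + (1 / (ε - 1)) * (1 / (1 + γ * φ (Mp M))) →
      M ∈ Set.Ioo (1:ℝ) (ε / (ε - 1)) := by
    intro M hM hMeq
    have hMeq' : M = F M := hMeq
    exact ⟨hMeq' ▸ hFgt1 M hM, hMeq' ▸ hFub M hM⟩
  refine ⟨?_, hrange⟩
  -- existence
  have hmid : (1 + Mb) / 2 ∈ Set.Ioo (0:ℝ) Mb := ⟨by linarith, by linarith⟩
  set y₀ := Mp ((1 + Mb) / 2) with hy₀def
  have hy₀ : y₀ ∈ Set.Ioo (0:ℝ) Mh := hmem _ hmid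
  set K := max 1 (2 / ((ε - 1) * (Mb - 1) * γ)) with hKdef
  have hev : ∀ᶠ x in nhdsWithin Mh (Set.Iio Mh), K ≤ φ x :=
    hφtop.eventually_ge_atTop K
  rcases mem_nhdsLT_iff_exists_Ioo_subset.mp hev with ⟨l, hl, hsub⟩
  have hlMh : l < Mh := hl
  set y := max y₀ ((l + Mh) / 2) with hydef
  have hyMh : y < Mh := max_lt hy₀.2 (by linarith)
  have hyl : l < y := lt_of_lt_of_le (by linarith) (le_max_right _ _)
  have hy0 : 0 < y := lt_of_lt_of_le hy₀.1 (le_max_left _ _)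
  have hφyK : K ≤ φ y := hsub ⟨hyl, hyMh⟩
  obtain ⟨b, hbS, hby⟩ := hMpbij.surjOn (⟨hy0, hyMh⟩ : y ∈ Set.Ioo (0:ℝ) Mh)
  have hbmid : (1 + Mb) / 2 ≤ b := by
    by_contra h
    push_neg at h
    have h1 : Mp b < Mp ((1 + Mb) / 2) := hMpmono hbS hmid h
    rw [hby] at h1
    exact absurd (le_max_left y₀ ((l + Mh) / 2)) (not_le.mpr h1)
  have hb1 : 1 < b := by linarith
  have hφypos : 0 < φ y := hφpos y ⟨hy0, hyMh⟩
  -- F b < b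
  have hFb : F b < b := by
    have hK2 : 2 / ((ε - 1) * (Mb - 1) * γ) ≤ K := le_max_right _ _
    have hγK : 2 / ((ε - 1) * (Mb - 1)) ≤ γ * K := by
      have h := mul_le_mul_of_nonneg_left hK2 hγ.le
      have heq : γ * (2 / ((ε - 1) * (Mb - 1) * γ)) = 2 / ((ε - 1) * (Mb - 1)) := by
        rw [← div_div, mul_comm, div_mul_cancel₀ _ (ne_of_gt hγ)]
      linarith [heq ▸ h]
    have hu : 2 / ((ε - 1) * (Mb - 1)) ≤ γ * φ y := by
      have := mul_le_mul_of_nonneg_left hφyK hγ.le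
      linarith
    have hu2 : 2 ≤ γ * φ y * ((ε - 1) * (Mb - 1)) := by
      rw [div_le_iff₀ (by nlinarith)] at hu
      linarith
    have hd : 0 < 1 + γ * φ y := by positivity
    have key : (1 / (ε - 1)) * (1 / (1 + γ * φ y)) < (Mb - 1) / 2 := by
      rw [div_mul_div_comm, one_mul, div_lt_div_iff₀ (by positivity) two_pos]
      nlinarith
    have : F b = 1 + (1 / (ε - 1)) * (1 / (1 + γ * φ y)) := by
      simp only [hF, hby]
    rw [this]
    linarith
  -- continuity of x ↦ x - F x on Icc (1/2) b
  have hab : (1:ℝ)/2 < b := by linarith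
  have hsubIcc : Set.Icc ((1:ℝ)/2) b ⊆ Set.Ioo (0:ℝ) Mb := by
    intro x hx
    exact ⟨by linarith [hx.1], lt_of_le_of_lt hx.2 hbS.2⟩
  have hφMpcont : ContinuousOn (fun x => φ (Mp x)) (Set.Icc ((1:ℝ)/2) b) :=
    hφcont.comp (hMpcont.mono hsubIcc) (fun x hx => hmem x (hsubIcc hx))
  have hdencont : ContinuousOn (fun x => 1 + γ * φ (Mp x)) (Set.Icc ((1:ℝ)/2) b) :=
    continuousOn_const.add (continuousOn_const.mul hφMpcont)
  have hFcont : ContinuousOn F (Set.Icc ((1:ℝ)/2) b) := by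
    apply continuousOn_const.add
    apply continuousOn_const.mul
    exact continuousOn_const.div hdencont
      (fun x hx => ne_of_gt (by linarith [hden x (hsubIcc hx)]))
  have hgcont : ContinuousOn (fun x => x - F x) (Set.Icc ((1:ℝ)/2) b) :=
    continuousOn_id.sub hFcont
  have hga : (1:ℝ)/2 - F (1/2) < 0 := by
    have := hFgt1 (1/2) (hsubIcc ⟨le_refl _, hab.le⟩)
    linarith
  have hgb : 0 < b - F b := by linarith
  have h0mem : (0:ℝ) ∈ Set.Icc ((1:ℝ)/2 - F (1/2)) (b - F b) := ⟨hga.le, hgb.le⟩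
  obtain ⟨c, hcIcc, hc0⟩ := intermediate_value_Icc hab.le hgcont h0mem
  have hcS : c ∈ Set.Ioo (0:ℝ) Mb := hsubIcc hcIcc
  have hceq : c = F c := by
    have : c - F c = 0 := hc0
    linarith
  refine ⟨c, ⟨hcS, hceq⟩, ?_⟩
  rintro M ⟨hMS, hMeq⟩
  have hMeq' : M = F M := hMeq
  rcases lt_trichotomy M c with h | h | h
  · exfalso
    have := hFanti M hMS c hcS h
    rw [← hMeq', ← hceq] at this
    linarith
  · exact h
  · exfalso
    have := hFanti c hcS M hMS h
    rw [← hMeq', ← hceq] at this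
    linarith
end

section
/- If the price satisfies P = M(M^p(P))·C where the markup function M has elasticity dln M/dln M^p = -γφσ/[(ε+(ε-1)γφ)(1+γφ)] at the equilibrium and the perceived markup M^p(P) has elasticity γ in P, then the cost passthrough β = dln P/dln C equals 1/(1 + γ²φσ/[(1+γφ)(ε+(ε-1)γφ)]), and β ∈ (0,1) whenever γ > 0, φ > 0, σ > 0, ε > 1. -/
/-- If the passthrough `β` satisfies `β = (dln M/dln Mp) * γ * β + 1` where the
markup elasticity is `dln M/dln Mp = -γφσ / ((ε + (ε-1)γφ)(1 + γφ))`, then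
`β = 1 / (1 + γ²φσ / ((1+γφ)(ε+(ε-1)γφ)))` and `β ∈ (0,1)`. -/
theorem cost_passthrough
    (γ φ σ ε β : ℝ) (hγ : 0 < γ) (hγ1 : γ ≤ 1) (hφ : 0 < φ) (hσ : 0 < σ)
    (hε : 1 < ε)
    (hβ : β = (-(γ * φ * σ) / ((ε + (ε - 1) * γ * φ) * (1 + γ * φ))) * γ * β + 1) :
    β = 1 / (1 + γ ^ 2 * φ * σ / ((1 + γ * φ) * (ε + (ε - 1) * γ * φ))) ∧
    0 < β ∧ β < 1 := by
  have h1 : 0 < 1 + γ * φ := by nlinarith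
  have h2 : 0 < ε + (ε - 1) * γ * φ := by nlinarith
  have hk : 0 < γ ^ 2 * φ * σ / ((1 + γ * φ) * (ε + (ε - 1) * γ * φ)) := by positivity
  set k := γ ^ 2 * φ * σ / ((1 + γ * φ) * (ε + (ε - 1) * γ * φ)) with hkdef
  have hβk : β * (1 + k) = 1 := by
    rw [hkdef]
    field_simp at hβ ⊢
    linear_combination hβ
  have h1k : 0 < 1 + k := by linarith
  have hβeq : β = 1 / (1 + k) := by
    field_simp
    linarith [hβk]
  refine ⟨hβeq, ?_, ?_⟩
  · rw [hβeq]; positivity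
  · rw [hβeq]
    rw [div_lt_one h1k]
    linarith
end

section
/- Differentiating the fixed-point markup equation M = 1 + (1/(ε-1))·(1/(1+γφ(M^p))) with respect to M^p, using (ε-1)(1+γφ)M = ε + (ε-1)γφ and the superelasticity relation dφ/dln M^p = φσ, yields the elasticity dln M/dln M^p = -γφσ / [(ε + (ε-1)γφ)(1 + γφ)]. -/
/-- Differentiating the markup formula `M m = 1 + (1/(ε-1)) / (1 + γ * φ m)`
with respect to the perceived markup `m` yields the elasticity
`m * M' m / M m = -γ φ σ / ((ε + (ε-1) γ φ)(1 + γ φ))`, where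
`σ = m * φ' m / φ m` is the superelasticity. -/
theorem markup_elasticity
    (ε γ : ℝ) (hε : 1 < ε) (hγ : 0 < γ) (hγ1 : γ ≤ 1)
    (φ M : ℝ → ℝ)
    (hφd : ∀ m : ℝ, 0 < m → DifferentiableAt ℝ φ m)
    (hφpos : ∀ m : ℝ, 0 < m → 0 < φ m)
    (hM : ∀ m : ℝ, M m = 1 + (1 / (ε - 1)) / (1 + γ * φ m)) :
    ∀ m : ℝ, 0 < m →
      m * deriv M m / M m =
        -(γ * φ m * (m * deriv φ m / φ m)) /
          ((ε + (ε - 1) * γ * φ m) * (1 + γ * φ m)) := by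
  intro m hm
  have hMf : M = fun x => 1 + (1 / (ε - 1)) / (1 + γ * φ x) := funext hM
  have hφm := hφpos m hm
  have hden : (1 + γ * φ m) ≠ 0 := by positivity
  have hε1 : ε - 1 ≠ 0 := by linarith
  have hg : HasDerivAt (fun x => 1 + γ * φ x) (γ * deriv φ m) m :=
    (((hφd m hm).hasDerivAt).const_mul γ).const_add 1
  have hMd : HasDerivAt M
      ((0 * (1 + γ * φ m) - (1 / (ε - 1)) * (γ * deriv φ m)) / (1 + γ * φ m) ^ 2) m := by
    rw [hMf]
    exact (((hasDerivAt_const m (1 / (ε - 1))).div hg hden)).const_add 1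
  rw [hMd.deriv, hM m]
  have hε1' : (0:ℝ) < ε - 1 := by linarith
  have hdpos : (0:ℝ) < 1 + γ * φ m := by positivity
  have hMne : (1 + 1 / (ε - 1) / (1 + γ * φ m)) ≠ 0 := by positivity
  have hpos : (0:ℝ) < ε + (ε - 1) * γ * φ m := by nlinarith [mul_pos (mul_pos hε1' hγ) hφm]
  have h2 : ε + (ε - 1) * γ * φ m ≠ 0 := ne_of_gt hpos
  field_simp
  ring
end

section
/- The function Δ(γ, τ, ε) = γ²τ[(1+τ)ε - 1] / {(ε-1)[(1+γτ)ε - 1](1+γτ)} is strictly decreasing in ε > 1 and strictly increasing in τ > 0 and in γ ∈ (0,1]. Consequently the passthrough β = 1/(1+Δ) is increasing in ε and decreasing in τ and γ. -/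
private lemma denom_pos' {γ τ ε : ℝ} (hγ : 0 < γ) (hτ : 0 < τ) (hε : 1 < ε) :
    0 < (ε - 1) * ((1 + γ * τ) * ε - 1) * (1 + γ * τ) := by
  have h1 : 0 < ε - 1 := by linarith
  have h2 : 0 < (1 + γ * τ) * ε - 1 := by nlinarith [mul_pos hγ hτ]
  have h3 : 0 < 1 + γ * τ := by nlinarith [mul_pos hγ hτ]
  positivity

private lemma Δpos' {γ τ ε : ℝ} (hγ : 0 < γ) (hτ : 0 < τ) (hε : 1 < ε) :
    0 < γ ^ 2 * τ * ((1 + τ) * ε - 1) /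
        ((ε - 1) * ((1 + γ * τ) * ε - 1) * (1 + γ * τ)) := by
  apply div_pos _ (denom_pos' hγ hτ hε)
  have : 0 < (1 + τ) * ε - 1 := by nlinarith
  positivity

private lemma mono_eps {γ τ ε₁ ε₂ : ℝ} (hγ : 0 < γ) (hγ1 : γ ≤ 1) (hτ : 0 < τ)
    (hε₁ : 1 < ε₁) (h12 : ε₁ < ε₂) :
    γ ^ 2 * τ * ((1 + τ) * ε₂ - 1) /
        ((ε₂ - 1) * ((1 + γ * τ) * ε₂ - 1) * (1 + γ * τ)) <
    γ ^ 2 * τ * ((1 + τ) * ε₁ - 1) /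
        ((ε₁ - 1) * ((1 + γ * τ) * ε₁ - 1) * (1 + γ * τ)) := by
  have hε₂ : 1 < ε₂ := lt_trans hε₁ h12
  rw [div_lt_div_iff₀ (denom_pos' hγ hτ hε₂) (denom_pos' hγ hτ hε₁)]
  have hgt : 0 < γ * τ := mul_pos hγ hτ
  have hA : 0 < γ ^ 2 * τ := by positivity
  have hb : 0 < 1 + γ * τ := by linarith
  have hd : 0 < ε₂ - ε₁ := by linarith
  have hE : 0 < (1 + τ) * (1 + γ * τ) * ε₁ * ε₂ - (1 + γ * τ) * (ε₁ + ε₂) +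
      (1 + γ * τ) + 1 - (1 + τ) := by
    have h1 : 0 < (ε₁ - 1) * (ε₂ - 1) := mul_pos (by linarith) (by linarith)
    have h2 : 0 < τ * (ε₁ * ε₂ - 1) := mul_pos hτ (by nlinarith)
    nlinarith [mul_nonneg hgt.le h1.le, mul_nonneg hgt.le h2.le]
  nlinarith [mul_pos (mul_pos (mul_pos hA hb) hd) hE]
private lemma mono_tau {γ τ₁ τ₂ ε : ℝ} (hγ : 0 < γ) (hγ1 : γ ≤ 1) (hτ₁ : 0 < τ₁)
    (h12 : τ₁ < τ₂) (hε : 1 < ε) :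
    γ ^ 2 * τ₁ * ((1 + τ₁) * ε - 1) /
        ((ε - 1) * ((1 + γ * τ₁) * ε - 1) * (1 + γ * τ₁)) <
    γ ^ 2 * τ₂ * ((1 + τ₂) * ε - 1) /
        ((ε - 1) * ((1 + γ * τ₂) * ε - 1) * (1 + γ * τ₂)) := by
  have hτ₂ : 0 < τ₂ := lt_trans hτ₁ h12
  rw [div_lt_div_iff₀ (denom_pos' hγ hτ₁ hε) (denom_pos' hγ hτ₂ hε)]
  have hm : 0 < ε - 1 := by linarith
  have hε' : 0 < ε := by linarith
  have hd : 0 < τ₂ - τ₁ := by linarith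
  have hg1 : 0 ≤ 1 - γ := by linarith
  have hA : 0 < γ ^ 2 * (ε - 1) := by positivity
  have hE : 0 < (ε - 1) ^ 2 + (ε - 1) * ε * (τ₁ + τ₂) +
      γ * ε * τ₁ * τ₂ * ((1 - γ) * (ε - 1) + ε) := by positivity
  nlinarith [mul_pos (mul_pos hA hd) hE]
private lemma mono_gamma {γ₁ γ₂ τ ε : ℝ} (hγ₁ : 0 < γ₁) (h12 : γ₁ < γ₂) (hγ2 : γ₂ ≤ 1)
    (hτ : 0 < τ) (hε : 1 < ε) :
    γ₁ ^ 2 * τ * ((1 + τ) * ε - 1) /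
        ((ε - 1) * ((1 + γ₁ * τ) * ε - 1) * (1 + γ₁ * τ)) <
    γ₂ ^ 2 * τ * ((1 + τ) * ε - 1) /
        ((ε - 1) * ((1 + γ₂ * τ) * ε - 1) * (1 + γ₂ * τ)) := by
  have hγ₂ : 0 < γ₂ := lt_trans hγ₁ h12
  rw [div_lt_div_iff₀ (denom_pos' hγ₁ hτ hε) (denom_pos' hγ₂ hτ hε)]
  have hm : 0 < ε - 1 := by linarith
  have hε' : 0 < ε := by linarith
  have hd : 0 < γ₂ - γ₁ := by linarith
  have hN : 0 < (1 + τ) * ε - 1 := by nlinarith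
  have hA : 0 < τ * ((1 + τ) * ε - 1) * (ε - 1) := by positivity
  have hE : 0 < (ε - 1) * (γ₁ + γ₂) + (ε - 1) * τ * (γ₁ * γ₂) +
      τ * ε * (γ₁ * γ₂) := by positivity
  nlinarith [mul_pos (mul_pos hA hd) hE]
/-- The auxiliary function `Δ(γ,τ,ε) = γ²τ[(1+τ)ε-1] / ((ε-1)[(1+γτ)ε-1](1+γτ))`
is strictly decreasing in `ε > 1` and strictly increasing in `τ > 0` and in
`γ ∈ (0,1]`; consequently the passthrough `β = 1/(1+Δ)` is increasing in `ε`
and decreasing in `τ` and `γ`. -/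
theorem passthrough_comparative_statics
    (Δ : ℝ → ℝ → ℝ → ℝ)
    (hΔ : ∀ γ τ ε : ℝ, Δ γ τ ε =
      γ ^ 2 * τ * ((1 + τ) * ε - 1) /
        ((ε - 1) * ((1 + γ * τ) * ε - 1) * (1 + γ * τ))) :
    (∀ γ τ ε₁ ε₂ : ℝ, 0 < γ → γ ≤ 1 → 0 < τ → 1 < ε₁ → ε₁ < ε₂ →
      Δ γ τ ε₂ < Δ γ τ ε₁) ∧
    (∀ γ τ₁ τ₂ ε : ℝ, 0 < γ → γ ≤ 1 → 0 < τ₁ → τ₁ < τ₂ → 1 < ε →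
      Δ γ τ₁ ε < Δ γ τ₂ ε) ∧
    (∀ γ₁ γ₂ τ ε : ℝ, 0 < γ₁ → γ₁ < γ₂ → γ₂ ≤ 1 → 0 < τ → 1 < ε →
      Δ γ₁ τ ε < Δ γ₂ τ ε) ∧
    (∀ γ τ ε₁ ε₂ : ℝ, 0 < γ → γ ≤ 1 → 0 < τ → 1 < ε₁ → ε₁ < ε₂ →
      1 / (1 + Δ γ τ ε₁) < 1 / (1 + Δ γ τ ε₂)) ∧
    (∀ γ τ₁ τ₂ ε : ℝ, 0 < γ → γ ≤ 1 → 0 < τ₁ → τ₁ < τ₂ → 1 < ε →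
      1 / (1 + Δ γ τ₂ ε) < 1 / (1 + Δ γ τ₁ ε)) ∧
    (∀ γ₁ γ₂ τ ε : ℝ, 0 < γ₁ → γ₁ < γ₂ → γ₂ ≤ 1 → 0 < τ → 1 < ε →
      1 / (1 + Δ γ₂ τ ε) < 1 / (1 + Δ γ₁ τ ε)) := by
  have hpos : ∀ γ τ ε : ℝ, 0 < γ → 0 < τ → 1 < ε → 0 < Δ γ τ ε := by
    intro γ τ ε hγ hτ hε; rw [hΔ]; exact Δpos' hγ hτ hε
  have he : ∀ γ τ ε₁ ε₂ : ℝ, 0 < γ → γ ≤ 1 → 0 < τ → 1 < ε₁ → ε₁ < ε₂ →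
      Δ γ τ ε₂ < Δ γ τ ε₁ := by
    intro γ τ ε₁ ε₂ h1 h2 h3 h4 h5; rw [hΔ, hΔ]; exact mono_eps h1 h2 h3 h4 h5
  have ht : ∀ γ τ₁ τ₂ ε : ℝ, 0 < γ → γ ≤ 1 → 0 < τ₁ → τ₁ < τ₂ → 1 < ε →
      Δ γ τ₁ ε < Δ γ τ₂ ε := by
    intro γ τ₁ τ₂ ε h1 h2 h3 h4 h5; rw [hΔ, hΔ]; exact mono_tau h1 h2 h3 h4 h5
  have hg : ∀ γ₁ γ₂ τ ε : ℝ, 0 < γ₁ → γ₁ < γ₂ → γ₂ ≤ 1 → 0 < τ → 1 < ε →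
      Δ γ₁ τ ε < Δ γ₂ τ ε := by
    intro γ₁ γ₂ τ ε h1 h2 h3 h4 h5; rw [hΔ, hΔ]; exact mono_gamma h1 h2 h3 h4 h5
  refine ⟨he, ht, hg, ?_, ?_, ?_⟩
  · intro γ τ ε₁ ε₂ h1 h2 h3 h4 h5
    have := hpos γ τ ε₂ h1 h3 (lt_trans h4 h5)
    exact one_div_lt_one_div_of_lt (by linarith) (by linarith [he γ τ ε₁ ε₂ h1 h2 h3 h4 h5])
  · intro γ τ₁ τ₂ ε h1 h2 h3 h4 h5
    have := hpos γ τ₁ ε h1 h3 h5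
    exact one_div_lt_one_div_of_lt (by linarith) (by linarith [ht γ τ₁ τ₂ ε h1 h2 h3 h4 h5])
  · intro γ₁ γ₂ τ ε h1 h2 h3 h4 h5
    have := hpos γ₁ τ ε h1 h4 h5
    exact one_div_lt_one_div_of_lt (by linarith) (by linarith [hg γ₁ γ₂ τ ε h1 h2 h3 h4 h5])
end

section
/- Under acclimated linear fairness, the passthrough β(γ,τ,ε) = 1/(1 + γ²τ[(1+τ)ε-1]/{(ε-1)[(1+γτ)ε-1](1+γτ)}) satisfies 0 < β < 1 for all γ ∈ (0,1], τ > 0, ε > 1, and β → 1 as γ → 0⁺ or as τ → 0⁺. -/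
/-- Under acclimated linear fairness, the passthrough
`β(γ,τ,ε) = 1/(1 + γ²τ[(1+τ)ε-1]/((ε-1)[(1+γτ)ε-1](1+γτ)))` satisfies
`0 < β < 1` for all `γ ∈ (0,1]`, `τ > 0`, `ε > 1`, and `β → 1` as `γ → 0⁺`
or as `τ → 0⁺`. -/
theorem passthrough_bounds_and_limits
    (β : ℝ → ℝ → ℝ → ℝ)
    (hβ : ∀ γ τ ε : ℝ, β γ τ ε =
      1 / (1 + γ ^ 2 * τ * ((1 + τ) * ε - 1) /
        ((ε - 1) * ((1 + γ * τ) * ε - 1) * (1 + γ * τ)))) :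
    (∀ γ τ ε : ℝ, 0 < γ → γ ≤ 1 → 0 < τ → 1 < ε →
      0 < β γ τ ε ∧ β γ τ ε < 1) ∧
    (∀ τ ε : ℝ, 0 < τ → 1 < ε →
      Filter.Tendsto (fun γ => β γ τ ε) (nhdsWithin 0 (Set.Ioi 0)) (nhds 1)) ∧
    (∀ γ ε : ℝ, 0 < γ → γ ≤ 1 → 1 < ε →
      Filter.Tendsto (fun τ => β γ τ ε) (nhdsWithin 0 (Set.Ioi 0)) (nhds 1)) := by
  refine ⟨?_, ?_, ?_⟩
  · intro γ τ ε hγ hγ1 hτ hε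
    rw [hβ]
    have h1 : (0:ℝ) < (1 + τ) * ε - 1 := by nlinarith
    have h2 : (0:ℝ) < ε - 1 := by linarith
    have h3 : (0:ℝ) < 1 + γ * τ := by nlinarith
    have h4 : (0:ℝ) < (1 + γ * τ) * ε - 1 := by nlinarith
    have hX : 0 < γ ^ 2 * τ * ((1 + τ) * ε - 1) /
        ((ε - 1) * ((1 + γ * τ) * ε - 1) * (1 + γ * τ)) := by positivity
    constructor
    · positivity
    · rw [div_lt_one (by linarith)]
      linarith
  · intro τ ε hτ hε
    have hden : ((ε - 1) * ((1 + (0:ℝ) * τ) * ε - 1) * (1 + 0 * τ)) ≠ 0 := by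
      have : (0:ℝ) < ε - 1 := by linarith
      simp only [zero_mul, add_zero, one_mul, mul_one]
      positivity
    have hX : Filter.Tendsto (fun γ : ℝ => γ ^ 2 * τ * ((1 + τ) * ε - 1) /
        ((ε - 1) * ((1 + γ * τ) * ε - 1) * (1 + γ * τ))) (nhds 0) (nhds 0) := by
      have h := (Filter.Tendsto.div
        (f := fun γ : ℝ => γ ^ 2 * τ * ((1 + τ) * ε - 1))
        (g := fun γ : ℝ => (ε - 1) * ((1 + γ * τ) * ε - 1) * (1 + γ * τ))
        (by exact (continuous_id.pow 2 |>.mul continuous_const |>.mul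
          continuous_const).tendsto 0)
        (((continuous_const.mul (((continuous_const.add
          (continuous_id.mul continuous_const)).mul continuous_const).sub
          continuous_const)).mul (continuous_const.add
          (continuous_id.mul continuous_const))).tendsto 0) hden)
      simpa [Pi.div_def] using h
    have h1 : Filter.Tendsto (fun γ : ℝ => β γ τ ε) (nhds 0) (nhds 1) := by
      have := (Filter.Tendsto.div (tendsto_const_nhds (x := (1:ℝ)))
        (Filter.Tendsto.add (tendsto_const_nhds (x := (1:ℝ))) hX) (by norm_num))
      simp only [add_zero, div_one] at this
      refine this.congr fun γ => ?_
      rw [hβ, Pi.div_apply]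
    exact h1.mono_left nhdsWithin_le_nhds
  · intro γ ε hγ hγ1 hε
    have hden : ((ε - 1) * ((1 + γ * 0) * ε - 1) * (1 + γ * 0)) ≠ 0 := by
      have : (0:ℝ) < ε - 1 := by linarith
      simp only [mul_zero, add_zero, one_mul, mul_one]
      positivity
    have hX : Filter.Tendsto (fun τ : ℝ => γ ^ 2 * τ * ((1 + τ) * ε - 1) /
        ((ε - 1) * ((1 + γ * τ) * ε - 1) * (1 + γ * τ))) (nhds 0) (nhds 0) := by
      have h := (Filter.Tendsto.div
        (f := fun τ : ℝ => γ ^ 2 * τ * ((1 + τ) * ε - 1))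
        (g := fun τ : ℝ => (ε - 1) * ((1 + γ * τ) * ε - 1) * (1 + γ * τ))
        ((continuous_const.mul continuous_id |>.mul
          (((continuous_const.add continuous_id).mul continuous_const).sub
            continuous_const)).tendsto 0)
        (((continuous_const.mul (((continuous_const.add
          (continuous_const.mul continuous_id)).mul continuous_const).sub
          continuous_const)).mul (continuous_const.add
          (continuous_const.mul continuous_id))).tendsto 0) hden)
      simpa [Pi.div_def] using h
    have h1 : Filter.Tendsto (fun τ : ℝ => β γ τ ε) (nhds 0) (nhds 1) := by
      have := (Filter.Tendsto.div (tendsto_const_nhds (x := (1:ℝ)))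
        (Filter.Tendsto.add (tendsto_const_nhds (x := (1:ℝ))) hX) (by norm_num))
      simp only [add_zero, div_one] at this
      refine this.congr fun τ => ?_
      rw [hβ, Pi.div_apply]
    exact h1.mono_left nhdsWithin_le_nhds
end

section
/- The slope of the long-run Phillips curve S(γ) = [(1-δγ)/γ + (1-δ)τ]·[(ε-1)(1-γ)/γ + ((1-γ)/(1-δγ))(1-δ)τε] is strictly decreasing in γ on (0,1), for any fixed δ ∈ (0,1), τ > 0, ε > 1. -/
/-- The γ-dependent factor of the long-run Phillips curve slope,
`S(γ) = ((1-δγ)/γ + (1-δ)τ) * ((ε-1)(1-γ)/γ + ((1-γ)/(1-δγ))(1-δ)τε)`,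
is strictly decreasing in `γ` on `(0,1)` for fixed `δ ∈ (0,1)`, `τ > 0`,
`ε > 1`. -/
theorem phillips_slope_decreasing_in_gamma
    (δ τ ε : ℝ) (hδ : 0 < δ) (hδ1 : δ < 1) (hτ : 0 < τ) (hε : 1 < ε) :
    StrictAntiOn
      (fun γ : ℝ =>
        ((1 - δ * γ) / γ + (1 - δ) * τ) *
          ((ε - 1) * (1 - γ) / γ + ((1 - γ) / (1 - δ * γ)) * (1 - δ) * τ * ε))
      (Set.Ioo 0 1) := by
  rintro a ⟨ha0, ha1⟩ b ⟨hb0, hb1⟩ hab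
  dsimp only
  have h1a : 0 < 1 - δ * a := by nlinarith
  have h1b : 0 < 1 - δ * b := by nlinarith
  have hε1 : 0 < ε - 1 := by linarith
  have hfa_pos : 0 < (1 - δ * a) / a + (1 - δ) * τ :=
    add_pos (div_pos h1a ha0) (mul_pos (by linarith) hτ)
  have hfab : (1 - δ * b) / b + (1 - δ) * τ < (1 - δ * a) / a + (1 - δ) * τ := by
    have : (1 - δ * b) / b < (1 - δ * a) / a := by
      rw [div_lt_div_iff₀ hb0 ha0]; nlinarith
    linarith
  have hgb_pos : 0 < (ε - 1) * (1 - b) / b + ((1 - b) / (1 - δ * b)) * (1 - δ) * τ * ε :=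
    add_pos (div_pos (mul_pos hε1 (by linarith)) hb0)
      (mul_pos (mul_pos (mul_pos (div_pos (by linarith) h1b) (by linarith)) hτ) (by linarith))
  have hg1 : (ε - 1) * (1 - b) / b < (ε - 1) * (1 - a) / a := by
    rw [div_lt_div_iff₀ hb0 ha0]; nlinarith [mul_pos hε1 (sub_pos.2 hab)]
  have hg2 : (1 - b) / (1 - δ * b) < (1 - a) / (1 - δ * a) := by
    rw [div_lt_div_iff₀ h1b h1a]; nlinarith
  have hg3 : ((1 - b) / (1 - δ * b)) * (1 - δ) * τ * ε <
      ((1 - a) / (1 - δ * a)) * (1 - δ) * τ * ε := by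
    have hc : 0 < (1 - δ) * τ * ε := mul_pos (mul_pos (by linarith) hτ) (by linarith)
    calc ((1 - b) / (1 - δ * b)) * (1 - δ) * τ * ε
        = ((1 - b) / (1 - δ * b)) * ((1 - δ) * τ * ε) := by ring
      _ < ((1 - a) / (1 - δ * a)) * ((1 - δ) * τ * ε) := by
          exact mul_lt_mul_of_pos_right hg2 hc
      _ = ((1 - a) / (1 - δ * a)) * (1 - δ) * τ * ε := by ring
  exact mul_lt_mul hfab (le_of_lt (add_lt_add hg1 hg3)) hgb_pos (le_of_lt hfa_pos)
end
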